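/- arXiv:1506.00868 — 3 statements merged into one kernel-verified Lean document; each statement's English description precedes it below -/
import Mathlib

section
/- Let C be a permutation class containing the permutations 12 and 21, with basis B, and let B★ be the set of non-simple permutations of B. Then C equals the set of permutations of the substitution closure Ĉ that avoid every pattern in B★. -/
/-- A permutation of size `n`, encoded as a bijection of `Fin n`. -/
abbrev Perm' (n : ℕ) := Equiv.Perm (Fin n)

/-- A finite permutation of arbitrary size. -/
abbrev PermS := Σ n : ℕ, Perm' n

/-- `π` is a pattern of `σ`: some subsequence of `σ` is order-isomorphic to `π`. -/
def IsPattern {k n : ℕ} (π : Perm' k) (σ : Perm' n) : Prop :=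
  ∃ f : Fin k ↪o Fin n, ∀ i j : Fin k, π i < π j ↔ σ (f i) < σ (f j)

/-- Pattern containment on finite permutations of arbitrary sizes. -/
def PattLe (π σ : PermS) : Prop := IsPattern π.2 σ.2

/-- `s` is an interval of `σ`: a nonempty range of consecutive indices whose image is a
range of consecutive values. -/
def IsIntervalF {n : ℕ} (σ : Perm' n) (s : Finset (Fin n)) : Prop :=
  s.Nonempty ∧ (∃ a b : Fin n, s = Finset.Icc a b) ∧ ∃ c d : Fin n, s.image σ = Finset.Icc c d

/-- A permutation is simple if it has size at least 4 and only trivial intervals. -/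
def IsSimple {n : ℕ} (σ : Perm' n) : Prop :=
  4 ≤ n ∧ ∀ s : Finset (Fin n), IsIntervalF σ s → s.card = 1 ∨ s = Finset.univ

def IsSimpleS (x : PermS) : Prop := IsSimple x.2

/-- `τ` is the substitution (inflation) `σ[q 0, …, q (n-1)]`: the positions of `τ` split
into `n` consecutive blocks, the `i`-th of size `p i` and order-isomorphic to `q i`, the
blocks of values being arranged according to `σ`. -/
def IsInflation {n N : ℕ} (σ : Perm' n) (p : Fin n → ℕ) (q : ∀ i, Perm' (p i))
    (τ : Perm' N) : Prop :=
  ∃ e : (Σ i : Fin n, Fin (p i)) ≃ Fin N,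
    (∀ (i j : Fin n) (x : Fin (p i)) (y : Fin (p j)),
      e ⟨i, x⟩ < e ⟨j, y⟩ ↔ (i < j ∨ ∃ h : i = j, (Fin.cast (congrArg p h) x : ℕ) < (y : ℕ))) ∧
    (∀ (i j : Fin n) (x : Fin (p i)) (y : Fin (p j)),
      τ (e ⟨i, x⟩) < τ (e ⟨j, y⟩) ↔
        (σ i < σ j ∨ ∃ h : i = j, (q j (Fin.cast (congrArg p h) x) : ℕ) < (q j y : ℕ)))

/-- A permutation class: a set of (nonempty) permutations closed under patterns. -/
def IsPermClass (C : Set PermS) : Prop :=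
  (∀ σ ∈ C, 1 ≤ σ.1) ∧ ∀ σ ∈ C, ∀ π : PermS, 1 ≤ π.1 → PattLe π σ → π ∈ C

/-- The substitution closure of a set of permutations. -/
inductive SubstClosure (C : Set PermS) : PermS → Prop
  | base {σ : PermS} : σ ∈ C → SubstClosure C σ
  | infl {n N : ℕ} (σ : Perm' n) (p : Fin n → ℕ) (q : ∀ i, Perm' (p i)) (τ : Perm' N) :
      (⟨n, σ⟩ : PermS) ∈ C → (∀ i, SubstClosure C ⟨p i, q i⟩) →
      IsInflation σ p q τ → SubstClosure C ⟨N, τ⟩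

/-- `Restr P E A`: permutations of `P` avoiding every pattern of `E` and containing every
pattern of `A`. -/
def Restr (P E A : Set PermS) : Set PermS :=
  {σ ∈ P | (∀ π ∈ E, ¬ PattLe π σ) ∧ ∀ π ∈ A, PattLe π σ}

/-- The set `π[S 0, …, S (n-1)]` of all inflations of `π` with components in the `S i`. -/
def InflSet {n : ℕ} (π : Perm' n) (S : Fin n → Set PermS) : Set PermS :=
  {τ | ∃ (p : Fin n → ℕ) (q : ∀ i, Perm' (p i)),
    (∀ i, (⟨p i, q i⟩ : PermS) ∈ S i) ∧ IsInflation π p q τ.2}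

/-- An embedding of `γ` into `π`: a cutting of the index word of `γ` into `n` (possibly
empty) consecutive factors whose blocks realize `γ` as a generalized substitution in `π`. -/
structure PatternEmbedding {g n : ℕ} (γ : Perm' g) (π : Perm' n) where
  c : Fin (n + 1) → ℕ
  mono : Monotone c
  first : c 0 = 0
  last : c (Fin.last n) = g
  compat : ∀ (i j : Fin n) (a b : Fin g), i ≠ j →
    c i.castSucc ≤ (a : ℕ) → (a : ℕ) < c i.succ →
    c j.castSucc ≤ (b : ℕ) → (b : ℕ) < c j.succ →
    (γ a < γ b ↔ π i < π j)

/-- `ρ` is the normalization of the restriction of `γ` to the positions in `[l, r)`. -/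
def IsBlockPattern {g m : ℕ} (γ : Perm' g) (l r : ℕ) (ρ : Perm' m) : Prop :=
  ∃ e : Fin m ≃ {a : Fin g // l ≤ (a : ℕ) ∧ (a : ℕ) < r},
    (∀ x y : Fin m, x < y ↔ (e x).1 < (e y).1) ∧
    ∀ x y : Fin m, ρ x < ρ y ↔ γ (e x).1 < γ (e y).1

/-- A block decomposition of `σ`: a sequence of intervals `(i₁,j₁),…,(iₘ,jₘ)` with
`i₁ = 1`, `jₘ = n` and `i_{k+1} = j_k + 1` (here with 0-indexed positions). -/
def IsBlockDecomp {n : ℕ} (σ : Perm' n) (L : List (Fin n × Fin n)) : Prop :=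
  ∃ h : L ≠ [],
    (∀ p ∈ L, p.1 ≤ p.2 ∧ IsIntervalF σ (Finset.Icc p.1 p.2)) ∧
    ((L.head h).1 : ℕ) = 0 ∧ ((L.getLast h).2 : ℕ) = n - 1 ∧
    List.Chain' (fun p q => (q.1 : ℕ) = (p.2 : ℕ) + 1) L
section AuxLemmas

lemma pattle_refl' (σ : PermS) : PattLe σ σ :=
  ⟨OrderEmbedding.ofStrictMono id strictMono_id, fun _ _ => Iff.rfl⟩

lemma pattle_trans' {π ρ σ : PermS} (h1 : PattLe π ρ) (h2 : PattLe ρ σ) : PattLe π σ := by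
  obtain ⟨f, hf⟩ := h1; obtain ⟨g, hg⟩ := h2
  exact ⟨f.trans g, fun i j => (hf i j).trans (hg (f i) (f j))⟩

lemma pattle_size' {π σ : PermS} (h : PattLe π σ) : π.1 ≤ σ.1 := by
  obtain ⟨f, -⟩ := h
  simpa using Fintype.card_le_of_embedding f.toEmbedding

lemma pattle_eq_of_size_eq' {π σ : PermS} (h : PattLe π σ) (hs : π.1 = σ.1) : π = σ := by
  obtain ⟨k, π⟩ := π; obtain ⟨n, σ⟩ := σ
  cases hs
  obtain ⟨f, hf⟩ := h
  dsimp only at f hf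
  have instk : WellFoundedLT (Fin k) := inferInstance
  have hid : StrictMono (id : Fin k → Fin k) := strictMono_id
  have hfid : (f : Fin k → Fin k) = id :=
    (@StrictMono.range_inj (Fin k) (Fin k) _ _ instk _ _ f.strictMono hid).1
      (by simp [Set.range_eq_univ.2 (Finite.surjective_of_injective f.injective)])
  have hval : ∀ i j, π i < π j ↔ σ i < σ j := by
    intro i j; simpa [hfid] using hf i j
  have : π = σ := by
    have hg : StrictMono (σ ∘ π.symm) := by
      intro u v huv
      have := (hval (π.symm u) (π.symm v)).1 (by simpa using huv)
      simpa using this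
    have hgid : (σ ∘ π.symm : Fin k → Fin k) = id :=
      (@StrictMono.range_inj (Fin k) (Fin k) _ _ instk _ _ hg hid).1
        (by simp [Set.range_eq_univ.2 (Finite.surjective_of_injective
          (σ.injective.comp π.symm.injective))])
    ext i
    have := congrFun hgid (π i)
    simp only [Function.comp_apply, Equiv.symm_apply_apply, id_eq] at this
    exact congrArg Fin.val this.symm
  simp [this]

/-- Every permutation of positive size outside `C` contains a minimal permutation
outside `C`. -/
lemma exists_min_not_mem' (C : Set PermS) :
    ∀ σ : PermS, 1 ≤ σ.1 → σ ∉ C →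
    ∃ β : PermS, (1 ≤ β.1 ∧ β ∉ C ∧ ∀ π : PermS, 1 ≤ π.1 → PattLe π β → π ≠ β → π ∈ C) ∧
      PattLe β σ := by
  suffices H : ∀ m : ℕ, ∀ σ : PermS, σ.1 = m → 1 ≤ σ.1 → σ ∉ C →
      ∃ β : PermS, (1 ≤ β.1 ∧ β ∉ C ∧ ∀ π : PermS, 1 ≤ π.1 → PattLe π β → π ≠ β → π ∈ C) ∧
        PattLe β σ by
    exact fun σ h1 h2 => H σ.1 σ rfl h1 h2
  intro m
  induction m using Nat.strong_induction_on with
  | _ m IH =>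
    rintro σ rfl h1 hσ
    by_cases h : ∀ π : PermS, 1 ≤ π.1 → PattLe π σ → π ≠ σ → π ∈ C
    · exact ⟨σ, ⟨h1, hσ, h⟩, pattle_refl' σ⟩
    · push_neg at h
      obtain ⟨π, hπ1, hp, hne, hπC⟩ := h
      have hlt : π.1 < σ.1 :=
        lt_of_le_of_ne (pattle_size' hp) fun he => hne (pattle_eq_of_size_eq' hp he)
      obtain ⟨β, hb, hb4⟩ := IH π.1 hlt π rfl hπ1 hπC
      exact ⟨β, hb, pattle_trans' hb4 hp⟩

lemma substClosure_size' {C : Set PermS} (hC : IsPermClass C) {τ : PermS}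
    (h : SubstClosure C τ) : 1 ≤ τ.1 := by
  induction h with
  | base h => exact hC.1 _ h
  | infl σ p q τ hσ hq hInf ih =>
    obtain ⟨e, -, -⟩ := hInf
    have hn : 0 < _ := hC.1 _ hσ
    have hp0 : 0 < p ⟨0, hn⟩ := ih ⟨0, hn⟩
    exact (e ⟨⟨0, hn⟩, ⟨0, hp0⟩⟩).pos

/-- A simple permutation contained in a member of the substitution closure of a
permutation class `C` belongs to `C`. -/
lemma simple_pattern_mem' (C : Set PermS) (hC : IsPermClass C) {τ₀ : PermS}
    (hτ : SubstClosure C τ₀) :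
    ∀ (g : ℕ) (β : Perm' g), IsSimple β → IsPattern β τ₀.2 → (⟨g, β⟩ : PermS) ∈ C := by
  induction hτ with
  | base h => exact fun g β hs hp => hC.2 _ h ⟨g, β⟩ (le_trans (by norm_num) hs.1) hp
  | @infl n N σ p q τ hσ hq hInf ih =>
    intro g β hsimp hp
    obtain ⟨f, hf⟩ := hp
    obtain ⟨e, he1, he2⟩ := hInf
    have hfa : ∀ a : Fin g, e ⟨(e.symm (f a)).1, (e.symm (f a)).2⟩ = f a := by
      intro a; rw [Sigma.eta]; exact e.apply_symm_apply _
    set blk : Fin g → Fin n := fun a => (e.symm (f a)).1 with hblkdef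
    have key1 : ∀ a b : Fin g, f a < f b ↔
        (blk a < blk b ∨ (blk a = blk b ∧ ((e.symm (f a)).2 : ℕ) < ((e.symm (f b)).2 : ℕ))) := by
      intro a b
      have h := he1 (e.symm (f a)).1 (e.symm (f b)).1 (e.symm (f a)).2 (e.symm (f b)).2
      rw [hfa a, hfa b] at h
      rw [h]
      constructor
      · rintro (h' | ⟨h', hlt⟩)
        · exact Or.inl h'
        · exact Or.inr ⟨h', by simpa using hlt⟩
      · rintro (h' | ⟨h', hlt⟩)
        · exact Or.inl h'
        · exact Or.inr ⟨h', by simpa using hlt⟩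
    have key2 : ∀ a b : Fin g, blk a ≠ blk b → (β a < β b ↔ σ (blk a) < σ (blk b)) := by
      intro a b hne
      have h := he2 (e.symm (f a)).1 (e.symm (f b)).1 (e.symm (f a)).2 (e.symm (f b)).2
      rw [hfa a, hfa b] at h
      rw [hf a b, h]
      constructor
      · rintro (h' | ⟨h', -⟩)
        · exact h'
        · exact absurd h' hne
      · exact Or.inl
    have hblkmono : Monotone blk := by
      intro a b hab
      rcases eq_or_lt_of_le hab with rfl | hlt
      · exact le_rfl
      · rcases (key1 a b).mp (f.strictMono hlt) with h' | ⟨h', -⟩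
        · exact h'.le
        · exact h'.le
    by_cases hA : ∃ i : Fin n, ∀ a : Fin g, blk a = i
    · -- all of β lies in a single block: recurse into q i
      obtain ⟨i, hi⟩ := hA
      set emb : Fin g → Fin (p i) :=
        fun a => Fin.cast (congrArg p (hi a)) (e.symm (f a)).2 with hembdef
      have hembe : ∀ a, e ⟨i, emb a⟩ = f a := by
        intro a
        rw [← hfa a]
        congr 1
        refine Sigma.ext (hi a).symm ?_
        exact (Fin.heq_ext_iff (congrArg p (hi a).symm)).2 rfl
      have hcast : ∀ (h : p i = p i) (x : Fin (p i)), Fin.cast h x = x := fun _ _ => rfl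
      have hmono : StrictMono emb := by
        intro a b hab
        have hlt := f.strictMono hab
        rw [← hembe a, ← hembe b] at hlt
        rcases (he1 i i (emb a) (emb b)).mp hlt with h' | ⟨heq, hlt'⟩
        · exact absurd h' (lt_irrefl i)
        · rw [hcast (congrArg p heq) (emb a)] at hlt'
          exact Fin.lt_def.mpr hlt'
      have hval : ∀ a b : Fin g, β a < β b ↔ q i (emb a) < q i (emb b) := by
        intro a b
        rw [hf a b, ← hembe a, ← hembe b, he2 i i (emb a) (emb b)]
        constructor
        · rintro (h' | ⟨heq, hlt'⟩)
          · exact absurd h' (lt_irrefl _)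
          · rw [hcast (congrArg p heq) (emb a)] at hlt'
            exact Fin.lt_def.mpr hlt'
        · intro h'
          exact Or.inr ⟨rfl, by
            rw [hcast (congrArg p rfl) (emb a)]
            exact Fin.lt_def.mp h'⟩
      exact ih i g β hsimp ⟨OrderEmbedding.ofStrictMono emb hmono, hval⟩
    · -- each block meets β in at most one point: β is a pattern of σ ∈ C
      have hinj : Function.Injective blk := by
        intro a b hab
        by_contra hne
        set s : Finset (Fin g) := Finset.univ.filter (fun c => blk c = blk a) with hs
        have hmem : ∀ c : Fin g, c ∈ s ↔ blk c = blk a := by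
          intro c; simp [hs]
        have hbetween : ∀ x y c : Fin g, x ∈ s → y ∈ s → x ≤ c → c ≤ y → c ∈ s := by
          intro x y c hx hy hxc hcy
          rw [hmem] at hx hy ⊢
          exact le_antisymm (hy ▸ hblkmono hcy) (hx ▸ hblkmono hxc)
        have ha : a ∈ s := (hmem a).2 rfl
        have hb : b ∈ s := (hmem b).2 hab.symm
        have hsne : s.Nonempty := ⟨a, ha⟩
        have hint : IsIntervalF β s := by
          refine ⟨hsne, ⟨s.min' hsne, s.max' hsne, ?_⟩, ?_⟩
          · ext c
            simp only [Finset.mem_Icc]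
            constructor
            · intro hc; exact ⟨s.min'_le c hc, s.le_max' c hc⟩
            · rintro ⟨h1, h2⟩
              exact hbetween _ _ c (s.min'_mem hsne) (s.max'_mem hsne) h1 h2
          · set t : Finset (Fin g) := s.image β with ht
            have htne : t.Nonempty := ⟨β a, Finset.mem_image_of_mem β ha⟩
            refine ⟨t.min' htne, t.max' htne, ?_⟩
            ext v
            simp only [Finset.mem_Icc]
            constructor
            · intro hv; exact ⟨t.min'_le v hv, t.le_max' v hv⟩
            · rintro ⟨h1, h2⟩
              obtain ⟨c1, hc1, hc1v⟩ := Finset.mem_image.mp (t.min'_mem htne)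
              obtain ⟨c2, hc2, hc2v⟩ := Finset.mem_image.mp (t.max'_mem htne)
              have hγ : β (β.symm v) = v := β.apply_symm_apply v
              have hvmem : β.symm v ∈ s := by
                rcases eq_or_lt_of_le h1 with he1' | hlt1
                · have : β.symm v = c1 := by
                    rw [← he1', ← hc1v]; exact β.symm_apply_apply c1
                  rwa [this]
                rcases eq_or_lt_of_le h2 with he2' | hlt2
                · have : β.symm v = c2 := by
                    rw [he2', ← hc2v]; exact β.symm_apply_apply c2
                  rwa [this]
                by_contra hcs
                have hnlt : blk (β.symm v) ≠ blk a := fun hh => hcs ((hmem _).2 hh)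
                have hc1a : blk c1 = blk a := (hmem c1).1 hc1
                have hc2a : blk c2 = blk a := (hmem c2).1 hc2
                have l1 : β c1 < β (β.symm v) := by rw [hγ, hc1v]; exact hlt1
                have l2 : β (β.symm v) < β c2 := by rw [hγ, hc2v]; exact hlt2
                have o1 : σ (blk a) < σ (blk (β.symm v)) := by
                  have := (key2 c1 (β.symm v) (by rw [hc1a]; exact fun hh => hnlt hh.symm)).1 l1
                  rwa [hc1a] at this
                have o2 : σ (blk (β.symm v)) < σ (blk a) := by
                  have := (key2 (β.symm v) c2 (by rw [hc2a]; exact hnlt)).1 l2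
                  rwa [hc2a] at this
                exact absurd o1 (lt_asymm o2)
              exact Finset.mem_image.mpr ⟨β.symm v, hvmem, hγ⟩
        rcases hsimp.2 s hint with hcard | huniv
        · have : 1 < s.card := Finset.one_lt_card.mpr ⟨a, ha, b, hb, hne⟩
          omega
        · exact hA ⟨blk a, fun c => (hmem c).1 (huniv ▸ Finset.mem_univ c)⟩
      have hsm : StrictMono blk := hblkmono.strictMono_of_injective hinj
      have hval : ∀ a b : Fin g, β a < β b ↔ σ (blk a) < σ (blk b) := by
        intro a b
        rcases eq_or_ne a b with rfl | hne
        · simp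
        · exact key2 a b fun h => hne (hinj h)
      exact hC.2 ⟨n, σ⟩ hσ ⟨g, β⟩ (le_trans (by norm_num) hsimp.1)
        ⟨OrderEmbedding.ofStrictMono blk hsm, hval⟩

end AuxLemmas

/-- If `C` is a permutation class containing `12` and `21`, with basis `B`, and `B★` is
the set of non-simple elements of `B`, then `C` is exactly the set of permutations of the
substitution closure of `C` avoiding every pattern of `B★`. -/
theorem class_eq_closure_avoiding_nonsimple_basis (C B : Set PermS) (hC : IsPermClass C)
    (h12 : (⟨2, Equiv.refl (Fin 2)⟩ : PermS) ∈ C)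
    (h21 : (⟨2, Equiv.swap 0 1⟩ : PermS) ∈ C)
    (hB : B = {β : PermS | 1 ≤ β.1 ∧ β ∉ C ∧
      ∀ π : PermS, 1 ≤ π.1 → PattLe π β → π ≠ β → π ∈ C}) :
    C = {σ : PermS | SubstClosure C σ ∧ ∀ β ∈ B, ¬ IsSimpleS β → ¬ PattLe β σ} := by
  
  subst hB
  ext σ
  simp only [Set.mem_setOf_eq]
  constructor
  · intro hσ
    refine ⟨SubstClosure.base hσ, ?_⟩
    intro β hβ _ hp
    exact hβ.2.1 (hC.2 σ hσ β hβ.1 hp)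
  · rintro ⟨hsc, havoid⟩
    by_contra hσC
    have h1 : 1 ≤ σ.1 := substClosure_size' hC hsc
    obtain ⟨β, ⟨hb1, hb2, hb3⟩, hb4⟩ := exists_min_not_mem' C σ h1 hσC
    have hβB : β ∈ {β : PermS | 1 ≤ β.1 ∧ β ∉ C ∧
        ∀ π : PermS, 1 ≤ π.1 → PattLe π β → π ≠ β → π ∈ C} := ⟨hb1, hb2, hb3⟩
    by_cases hsimp : IsSimpleS β
    · have hmem := simple_pattern_mem' C hC hsc β.1 β.2 hsimp hb4
      rw [Sigma.eta] at hmem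
      exact hb2 hmem
    · exact havoid β hβB hsimp hb4
end

section
/- Let π be a permutation of size n, D₁, …, Dₙ sets of permutations, and γ a permutation with set of embeddings {α₁, …, α_ℓ} into π. Then the set of permutations of π[D₁,…,Dₙ] that contain γ as a pattern equals ⋃_{i=1}^ℓ π[D₁(γ_{αᵢ(1)}), …, Dₙ(γ_{αᵢ(n)})], where D(τ) denotes the permutations of D containing τ as a pattern (with D(ε) = D for the empty permutation ε). -/
lemma q_cast {n : ℕ} (p : Fin n → ℕ) (q : ∀ i, Perm' (p i)) {i j : Fin n} (h : i = j)
    (z : Fin (p i)) : ((q j (Fin.cast (congrArg p h) z)) : ℕ) = (q i z : ℕ) := by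
  subst h; rfl

lemma lowerset_iff {g : ℕ} (S : Finset (Fin g))
    (hS : ∀ a b : Fin g, a ≤ b → b ∈ S → a ∈ S) (a : Fin g) : a ∈ S ↔ (a : ℕ) < S.card := by
  constructor
  · intro ha
    have h1 : Finset.Iic a ⊆ S := fun x hx => hS x a (Finset.mem_Iic.mp hx) ha
    have h2 := Finset.card_le_card h1
    rw [Fin.card_Iic] at h2
    omega
  · intro ha
    by_contra h
    have h1 : S ⊆ Finset.Iio a := fun x hx =>
      Finset.mem_Iio.mpr (lt_of_not_ge (fun hle => h (hS a x hle hx)))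
    have h2 := Finset.card_le_card h1
    rw [Fin.card_Iio] at h2
    omega

lemma exists_normalization {g m : ℕ} (V : Fin m → Fin g) (hV : Function.Injective V) :
    ∃ ρ : Perm' m, ∀ x y, ρ x < ρ y ↔ V x < V y := by
  classical
  set T := Finset.univ.image V with hT
  have hcard : T.card = m := by
    rw [hT, Finset.card_image_of_injective _ hV, Finset.card_univ, Fintype.card_fin]
  let j := T.orderIsoOfFin hcard
  let W : Fin m → T := fun x => ⟨V x, Finset.mem_image_of_mem _ (Finset.mem_univ x)⟩
  have hWinj : Function.Injective W := fun x y h => hV (congrArg Subtype.val h)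
  have hWbij : Function.Bijective W := by
    rw [Fintype.bijective_iff_injective_and_card]
    exact ⟨hWinj, by simp [Fintype.card_coe, hcard]⟩
  refine ⟨(Equiv.ofBijective W hWbij).trans j.symm.toEquiv, fun x y => ?_⟩
  show j.symm (W x) < j.symm (W y) ↔ _
  rw [j.symm.lt_iff_lt]
  exact Subtype.coe_lt_coe.symm

lemma exists_block {n g : ℕ} (c : Fin (n+1) → ℕ) (mono : Monotone c) (h0 : c 0 = 0)
    (hl : c (Fin.last n) = g) (a : ℕ) (ha : a < g) :
    ∃ i : Fin n, c i.castSucc ≤ a ∧ a < c i.succ := by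
  classical
  set d : ℕ → ℕ := fun k => c ⟨min k n, by omega⟩ with hd
  have hdm : Monotone d := fun x y hxy => mono (by simp [Fin.le_def]; omega)
  have hd0 : d 0 = 0 := by simpa [hd, Nat.min_eq_left (Nat.zero_le n)] using h0
  have hdn : d n = g := by simpa [hd, Fin.last] using hl
  set k := Nat.findGreatest (fun k => d k ≤ a) n with hk
  have hks : d k ≤ a :=
    Nat.findGreatest_spec (P := fun k => d k ≤ a) (Nat.zero_le n) (show d 0 ≤ a by omega)
  have hkn : k < n := by
    rcases Nat.lt_or_ge k n with h | h
    · exact h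
    · have h2 : k ≤ n := Nat.findGreatest_le n
      have h3 : k = n := le_antisymm h2 h
      rw [h3, hdn] at hks; omega
  have hk1 : ¬ d (k + 1) ≤ a :=
    Nat.findGreatest_is_greatest (P := fun k => d k ≤ a) (n := n) (Nat.lt_succ_self k) (by omega)
  refine ⟨⟨k, hkn⟩, ?_, ?_⟩
  · have : (Fin.castSucc ⟨k, hkn⟩ : Fin (n+1)) = ⟨min k n, by omega⟩ := by
      simp [Fin.ext_iff]; omega
    rw [this]; exact hks
  · have : (Fin.succ ⟨k, hkn⟩ : Fin (n+1)) = ⟨min (k+1) n, by omega⟩ := by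
      simp [Fin.ext_iff]; omega
    rw [this]
    have : d (k+1) = c ⟨min (k+1) n, by omega⟩ := rfl
    omega


lemma exists_blockPattern {g : ℕ} (γ : Perm' g) (l r : ℕ) :
    ∃ (m : ℕ) (ρ : Perm' m), IsBlockPattern γ l r ρ := by
  classical
  set S := {a : Fin g // l ≤ (a : ℕ) ∧ (a : ℕ) < r} with hS
  set E := monoEquivOfFin S rfl with hE
  obtain ⟨ρ, hρ⟩ := exists_normalization (g := g) (m := Fintype.card S)
      (fun x => γ (E x).1) (by
        intro x y hxy
        exact E.injective (Subtype.coe_injective (γ.injective hxy)))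
  refine ⟨Fintype.card S, ρ, E.toEquiv, fun x y => ?_, fun x y => hρ x y⟩
  rw [← E.lt_iff_lt]
  exact Subtype.coe_lt_coe.symm

/-- Propagation of a containment constraint: the permutations of `π[D₁,…,Dₙ]` containing
`γ` are the union, over all embeddings `α` of `γ` in `π`, of
`π[D₁(γ_{α(1)}),…,Dₙ(γ_{α(n)})]`. -/
theorem inflSet_containing_eq_union_embeddings {n g : ℕ} (π : Perm' n)
    (D : Fin n → Set PermS) (γ : Perm' g) (hD : ∀ i, ∀ x ∈ D i, 1 ≤ x.1) :
    {τ ∈ InflSet π D | PattLe ⟨g, γ⟩ τ} =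
      ⋃ (α : PatternEmbedding γ π),
        InflSet π (fun i =>
          {x ∈ D i | ∀ (m : ℕ) (ρ : Perm' m),
            IsBlockPattern γ (α.c i.castSucc) (α.c i.succ) ρ → PattLe ⟨m, ρ⟩ x}) := by
  classical
  ext τ
  obtain ⟨N, σ⟩ := τ
  simp only [InflSet, PattLe, IsPattern, Set.mem_setOf_eq, Set.mem_iUnion]
  constructor
  · rintro ⟨⟨p, q, hq, e, he1, he2⟩, f, hf⟩
    set blk : Fin g → Fin n := fun a => (e.symm (f a)).1 with hblk
    set pos : ∀ a : Fin g, Fin (p (blk a)) := fun a => (e.symm (f a)).2 with hpos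
    have hef : ∀ a, e ⟨blk a, pos a⟩ = f a := fun a => e.apply_symm_apply (f a)
    have key1 : ∀ a b : Fin g, f a < f b ↔
        (blk a < blk b ∨ (blk a = blk b ∧ (pos a : ℕ) < (pos b : ℕ))) := by
      intro a b
      rw [← hef a, ← hef b, he1]
      constructor
      · rintro (h | ⟨h, h2⟩)
        · exact Or.inl h
        · exact Or.inr ⟨h, by simpa using h2⟩
      · rintro (h | ⟨h, h2⟩)
        · exact Or.inl h
        · exact Or.inr ⟨h, by simpa using h2⟩
    have key2 : ∀ a b : Fin g, σ (f a) < σ (f b) ↔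
        (π (blk a) < π (blk b) ∨
          (blk a = blk b ∧ (q (blk a) (pos a) : ℕ) < (q (blk b) (pos b) : ℕ))) := by
      intro a b
      rw [← hef a, ← hef b, he2]
      constructor
      · rintro (h | ⟨h, h2⟩)
        · exact Or.inl h
        · exact Or.inr ⟨h, by rw [← q_cast p q h (pos a)]; exact h2⟩
      · rintro (h | ⟨h, h2⟩)
        · exact Or.inl h
        · exact Or.inr ⟨h, by rw [q_cast p q h (pos a)]; exact h2⟩
    have hblkmono : Monotone blk := by
      intro a b hab
      rcases eq_or_lt_of_le hab with h | h
      · rw [h]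
      · rcases (key1 a b).mp (f.strictMono h) with h2 | ⟨h2, _⟩
        · exact le_of_lt h2
        · exact le_of_eq h2
    set c : Fin (n+1) → ℕ :=
      fun k => (Finset.univ.filter (fun a : Fin g => (blk a : ℕ) < (k : ℕ))).card with hc
    have hmem : ∀ (k : Fin (n+1)) (a : Fin g), (a : ℕ) < c k ↔ (blk a : ℕ) < (k : ℕ) := by
      intro k a
      rw [← lowerset_iff]
      · simp
      · intro x y hxy hy
        simp only [Finset.mem_filter, Finset.mem_univ, true_and] at hy ⊢
        exact lt_of_le_of_lt (hblkmono hxy) hy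
    have hblkc : ∀ (i : Fin n) (a : Fin g),
        (c i.castSucc ≤ (a : ℕ) ∧ (a : ℕ) < c i.succ) ↔ blk a = i := by
      intro i a
      have h1 := hmem i.castSucc a
      have h2 := hmem i.succ a
      rw [Fin.coe_castSucc] at h1
      rw [Fin.val_succ] at h2
      rw [Fin.ext_iff]
      omega
    have cmono : Monotone c := by
      intro k k' hk
      apply Finset.card_le_card
      intro a ha
      simp only [Finset.mem_filter, Finset.mem_univ, true_and] at ha ⊢
      exact lt_of_lt_of_le ha hk
    have cfirst : c 0 = 0 := by
      simp [hc]
    have clast : c (Fin.last n) = g := by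
      have : (Finset.univ.filter (fun a : Fin g => (blk a : ℕ) < ((Fin.last n : Fin (n+1)) : ℕ)))
          = Finset.univ := by
        apply Finset.filter_true_of_mem
        intro a _
        simpa using (blk a).isLt
      simp only [hc, this, Finset.card_univ, Fintype.card_fin]
    have ccompat : ∀ (i j : Fin n) (a b : Fin g), i ≠ j →
        c i.castSucc ≤ (a : ℕ) → (a : ℕ) < c i.succ →
        c j.castSucc ≤ (b : ℕ) → (b : ℕ) < c j.succ →
        (γ a < γ b ↔ π i < π j) := by
      intro i j a b hij ha1 ha2 hb1 hb2
      have hai : blk a = i := (hblkc i a).mp ⟨ha1, ha2⟩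
      have hbj : blk b = j := (hblkc j b).mp ⟨hb1, hb2⟩
      rw [hf, key2]
      constructor
      · rintro (h | ⟨h, _⟩)
        · rw [hai, hbj] at h; exact h
        · rw [hai, hbj] at h; exact absurd h hij
      · exact fun h => Or.inl (by rw [hai, hbj]; exact h)
    refine ⟨⟨c, cmono, cfirst, clast, ccompat⟩, p, q, ?_, e, he1, he2⟩
    intro i
    refine ⟨hq i, ?_⟩
    intro m ρ hbp
    obtain ⟨e', hord, hval⟩ := hbp
    have hmemS : ∀ x : Fin m, blk (e' x).1 = i := fun x => (hblkc i (e' x).1).mp (e' x).2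
    set F : Fin m → Fin (p i) := fun x => Fin.cast (congrArg p (hmemS x)) (pos (e' x).1) with hF
    have hFval : ∀ x, (F x : ℕ) = (pos (e' x).1 : ℕ) := fun x => rfl
    have hqF : ∀ x, (q i (F x) : ℕ) = (q (blk (e' x).1) (pos (e' x).1) : ℕ) := by
      intro x
      exact (q_cast p q (hmemS x) _).symm ▸ rfl
    have hFmono : StrictMono F := by
      intro x y hxy
      have h1 : ((e' x).1 : Fin g) < (e' y).1 := (hord x y).mp hxy
      rcases (key1 _ _).mp (f.strictMono h1) with h2 | ⟨_, h2⟩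
      · rw [hmemS x, hmemS y] at h2
        exact absurd h2 (lt_irrefl i)
      · rw [Fin.lt_def, hFval x, hFval y]
        exact h2
    refine ⟨OrderEmbedding.ofStrictMono F hFmono, ?_⟩
    intro x y
    show ρ x < ρ y ↔ q i (F x) < q i (F y)
    have goal2 : (q i (F x) < q i (F y)) ↔
        ((q (blk (e' x).1) (pos (e' x).1) : ℕ) < (q (blk (e' y).1) (pos (e' y).1) : ℕ)) := by
      rw [Fin.lt_def, hqF x, hqF y]
    rw [hval x y, hf, key2, goal2]
    constructor
    · rintro (h | ⟨_, h⟩)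
      · rw [hmemS x, hmemS y] at h
        exact absurd h (lt_irrefl _)
      · exact h
    · intro h
      exact Or.inr ⟨by rw [hmemS x, hmemS y], h⟩
  · rintro ⟨α, p, q, hq, e, he1, he2⟩
    refine ⟨⟨p, q, fun i => (hq i).1, e, he1, he2⟩, ?_⟩
    have hblocks : ∀ i : Fin n, ∃ (m : ℕ) (ρ : Perm' m),
        IsBlockPattern γ (α.c i.castSucc) (α.c i.succ) ρ :=
      fun i => exists_blockPattern γ _ _
    choose m ρ hρ using hblocks
    have hpatt : ∀ i, ∃ F : Fin (m i) ↪o Fin (p i),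
        ∀ x y, ρ i x < ρ i y ↔ q i (F x) < q i (F y) :=
      fun i => (hq i).2 (m i) (ρ i) (hρ i)
    choose F hF using hpatt
    have hρ' : ∀ i, ∃ e' : Fin (m i) ≃
        {a : Fin g // α.c i.castSucc ≤ (a : ℕ) ∧ (a : ℕ) < α.c i.succ},
        (∀ x y, x < y ↔ (e' x).1 < (e' y).1) ∧
        ∀ x y, ρ i x < ρ i y ↔ γ (e' x).1 < γ (e' y).1 := fun i => hρ i
    choose e' he'ord he'val using hρ'
    have hfind : ∀ a : Fin g, ∃ i : Fin n,
        α.c i.castSucc ≤ (a : ℕ) ∧ (a : ℕ) < α.c i.succ :=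
      fun a => exists_block α.c α.mono α.first α.last a a.isLt
    choose I hI1 hI2 using hfind
    set X : ∀ a : Fin g, Fin (m (I a)) := fun a => (e' (I a)).symm ⟨a, hI1 a, hI2 a⟩ with hX
    have hXa : ∀ a, ((e' (I a)) (X a)).1 = a :=
      fun a => congrArg Subtype.val ((e' (I a)).apply_symm_apply _)
    have hsame1 : ∀ (i j : Fin n), i = j → ∀ (x : Fin (m i)) (y : Fin (m j)),
        (((e' i) x).1 < ((e' j) y).1) ↔ (F i x : ℕ) < (F j y : ℕ) := by
      rintro i j rfl x y
      rw [← he'ord i x y, ← Fin.lt_def]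
      exact ((F i).lt_iff_lt).symm
    have hsame2 : ∀ (i j : Fin n), i = j → ∀ (x : Fin (m i)) (y : Fin (m j)),
        (γ ((e' i) x).1 < γ ((e' j) y).1) ↔ (q i (F i x) : ℕ) < (q j (F j y) : ℕ) := by
      rintro i j rfl x y
      rw [← he'val i x y, hF i x y, Fin.lt_def]
    set f : Fin g → Fin N := fun a => e ⟨I a, F (I a) (X a)⟩ with hfdef
    have hImono : Monotone I := by
      intro a b hab
      by_contra hlt
      push_neg at hlt
      have hle : (I b).succ ≤ (I a).castSucc := by
        rw [Fin.le_def, Fin.val_succ, Fin.coe_castSucc]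
        rw [Fin.lt_def] at hlt
        omega
      have h1 := α.mono hle
      have h2 := hI2 b
      have h3 := hI1 a
      have h4 : (a : ℕ) ≤ (b : ℕ) := hab
      omega
    have hfmono : StrictMono f := by
      intro a b hab
      show e ⟨I a, F (I a) (X a)⟩ < e ⟨I b, F (I b) (X b)⟩
      rw [he1]
      rcases eq_or_lt_of_le (hImono (le_of_lt hab)) with h | h
      · refine Or.inr ⟨h, ?_⟩
        rw [Fin.coe_cast]
        rw [← hsame1 (I a) (I b) h (X a) (X b)]
        rw [hXa a, hXa b]
        exact hab
      · exact Or.inl h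
    refine ⟨OrderEmbedding.ofStrictMono f hfmono, ?_⟩
    intro a b
    show γ a < γ b ↔ σ (e ⟨I a, F (I a) (X a)⟩) < σ (e ⟨I b, F (I b) (X b)⟩)
    rw [he2]
    rcases eq_or_ne (I a) (I b) with h | h
    · have hval := hsame2 (I a) (I b) h (X a) (X b)
      rw [hXa a, hXa b] at hval
      constructor
      · intro hγ
        refine Or.inr ⟨h, ?_⟩
        rw [q_cast p q h (F (I a) (X a))]
        exact hval.mp hγ
      · rintro (hπ | ⟨_, hlt⟩)
        · rw [h] at hπ
          exact absurd hπ (lt_irrefl _)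
        · rw [q_cast p q h (F (I a) (X a))] at hlt
          exact hval.mpr hlt
    · have hcom := α.compat (I a) (I b) a b h (hI1 a) (hI2 a) (hI1 b) (hI2 b)
      rw [hcom]
      constructor
      · exact fun hπ => Or.inl hπ
      · rintro (hπ | ⟨h2, _⟩)
        · exact hπ
        · exact absurd h2 h
end

section
/- Let π be a simple permutation of size n, C₁, …, Cₙ sets of permutations, and γ a permutation whose embeddings into π are α₁, …, α_ℓ. Then the set of permutations of π[C₁,…,Cₙ] that avoid γ equals the union, over tuples (k₁,…,k_ℓ) ∈ [1..n]^ℓ such that each γ_{αᵢ(kᵢ)} is neither the empty permutation nor the permutation 1, of the sets π[C₁⟨E_{1,k}⟩, …, Cₙ⟨E_{n,k}⟩], where E_{m,k} = {γ_{αᵢ(kᵢ)} : i ∈ [1..ℓ], kᵢ = m} and C⟨F⟩ is the set of permutations of C avoiding every pattern in F. -/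
/-!
An occurrence of `γ` in an inflation `π[σ₁, …, σₙ]` cuts `γ` into consecutive, possibly empty
factors, the `k`-th one landing in `σₖ`. Entries in different factors compare as the
corresponding entries of `π`, so the cutting is an embedding `α` of `γ` into `π`, and each
factor `γ_{α(k)}` is a pattern of `σₖ`. Conversely, an embedding together with occurrences of
every factor `γ_{α(k)}` in `σₖ` assembles into an occurrence of `γ`. Hence an inflation avoids
`γ` iff every embedding `α` has a factor `γ_{α(k)}` that `σₖ` avoids; as the components are
nonempty, they contain every factor of size at most one, so `k` can be taken with a factor of
size at least two.
-/

open Finset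

abbrev Block (g l r : ℕ) := {a : Fin g // l ≤ (a : ℕ) ∧ (a : ℕ) < r}

section

variable {n g : ℕ}

theorem Monotone.le_of_cut_le_of_lt_cut {c : Fin (n + 1) → ℕ} (hc : Monotone c) {k j : Fin n}
    {a b : ℕ} (ha : c k.castSucc ≤ a) (hb : b < c j.succ) (hab : a ≤ b) : k ≤ j := by
  by_contra! hjk
  have := hc (Fin.succ_le_castSucc_iff.mpr hjk)
  omega

theorem exists_cut_le_lt_cut {c : Fin (n + 1) → ℕ} (h0 : c 0 = 0) {a : ℕ}
    (ha : a < c (Fin.last n)) : ∃ k : Fin n, c k.castSucc ≤ a ∧ a < c k.succ := by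
  classical
  set i := Fin.find (fun i => a < c i) ⟨_, ha⟩
  have hi : a < c i := Fin.find_spec (p := fun i => a < c i) _
  obtain ⟨k, hk⟩ := (Fin.exists_succ_eq (x := i)).mpr fun h => by rw [h, h0] at hi; omega
  exact ⟨k, not_lt.mp (Fin.find_min _ (hk ▸ Fin.castSucc_lt_succ)), hk ▸ hi⟩

def blockCuts (ι : Fin g → Fin n) (i : Fin (n + 1)) : ℕ := #{a | (ι a : ℕ) < i}

section BlockCuts

variable {ι : Fin g → Fin n}

theorem lt_blockCuts_iff (hι : Monotone ι) (a : Fin g) (i : Fin (n + 1)) :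
    (a : ℕ) < blockCuts ι i ↔ (ι a : ℕ) < i := by
  constructor
  · intro ha
    by_contra! hia
    have : blockCuts ι i ≤ #(Iio a) := card_le_card fun b hb => by
      simp only [mem_filter, mem_univ, true_and] at hb
      exact mem_Iio.mpr (lt_of_not_ge fun hab => by have := hι hab; omega)
    simp only [Fin.card_Iio] at this
    omega
  · intro hia
    have : #(Iic a) ≤ blockCuts ι i := card_le_card fun b hb => by
      simp only [mem_filter, mem_univ, true_and]
      have := hι (mem_Iic.mp hb)
      omega
    simp only [Fin.card_Iic] at this
    omega

theorem blockCuts_monotone : Monotone (blockCuts ι) := fun _ _ hij =>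
  card_le_card fun _ ha => by
    simp only [mem_filter, mem_univ, true_and] at ha ⊢
    exact ha.trans_le hij

theorem blockCuts_zero : blockCuts ι 0 = 0 := by simp [blockCuts]

theorem blockCuts_last : blockCuts ι (Fin.last n) = g := by simp [blockCuts]

theorem blockCuts_le_and_lt_blockCuts_iff (hι : Monotone ι) {a : Fin g} {k : Fin n} :
    blockCuts ι k.castSucc ≤ a ∧ (a : ℕ) < blockCuts ι k.succ ↔ ι a = k := by
  rw [← not_lt, lt_blockCuts_iff hι, lt_blockCuts_iff hι, Fin.ext_iff]
  simp only [Fin.val_castSucc, Fin.val_succ]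
  omega

end BlockCuts

def PatternEmbedding.ofBlockMap {γ : Perm' g} {π : Perm' n} (ι : Fin g → Fin n)
    (hι : Monotone ι) (hcompat : ∀ a b, ι a ≠ ι b → (γ a < γ b ↔ π (ι a) < π (ι b))) :
    PatternEmbedding γ π where
  c := blockCuts ι
  mono := blockCuts_monotone
  first := blockCuts_zero
  last := blockCuts_last
  compat i j a b hij hai hai' hbj hbj' := by
    obtain rfl := (blockCuts_le_and_lt_blockCuts_iff hι).mp ⟨hai, hai'⟩
    obtain rfl := (blockCuts_le_and_lt_blockCuts_iff hι).mp ⟨hbj, hbj'⟩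
    exact hcompat a b hij

theorem exists_perm_lt_iff_lt {s : ℕ} {α : Type*} [LinearOrder α] {v : Fin s → α}
    (hv : Function.Injective v) : ∃ ρ : Perm' s, ∀ x y, ρ x < ρ y ↔ v x < v y := by
  have hsort : StrictMono (v ∘ Tuple.sort v) :=
    (Tuple.monotone_sort v).strictMono_of_injective (hv.comp (Tuple.sort v).injective)
  refine ⟨(Tuple.sort v).symm, fun x y => ?_⟩
  simpa using (hsort.lt_iff_lt (a := (Tuple.sort v).symm x) (b := (Tuple.sort v).symm y)).symm

theorem exists_isBlockPattern (γ : Perm' g) (l r : ℕ) :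
    ∃ (m : ℕ) (ρ : Perm' m), IsBlockPattern γ l r ρ := by
  let E := monoEquivOfFin (Block g l r) rfl
  obtain ⟨ρ, hρ⟩ := exists_perm_lt_iff_lt (v := fun x => γ (E x).1)
    (γ.injective.comp (Subtype.val_injective.comp E.injective))
  exact ⟨_, ρ, E.toEquiv, fun x y => E.lt_iff_lt.symm, hρ⟩

theorem IsPattern.of_size_le_one {s m : ℕ} (ρ : Perm' s) (σ : Perm' m) (hs : s ≤ 1)
    (hm : s ≤ m) : IsPattern ρ σ := by
  refine ⟨Fin.castLEOrderEmb hm, fun i j => ?_⟩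
  obtain rfl : i = j := Fin.ext (by omega)
  exact iff_of_false (lt_irrefl _) (lt_irrefl _)

namespace IsBlockPattern

variable {γ : Perm' g} {l r m : ℕ} {ρ : Perm' m}

theorem size_le_one (h : IsBlockPattern γ l r ρ) (hlr : r ≤ l + 1) : m ≤ 1 := by
  obtain ⟨e, -, -⟩ := h
  simpa using Fintype.card_le_one_iff.mpr fun x y : Fin m =>
    e.injective (Subtype.ext (Fin.ext (by have := (e x).2; have := (e y).2; omega)))

theorem isPattern_iff (h : IsBlockPattern γ l r ρ) {N : ℕ} {σ : Perm' N} :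
    IsPattern ρ σ ↔ ∃ Z : Block g l r → Fin N, StrictMono Z ∧
      ∀ x y, γ x.1 < γ y.1 ↔ σ (Z x) < σ (Z y) := by
  obtain ⟨e, he_pos, he_val⟩ := h
  constructor
  · rintro ⟨f, hf⟩
    refine ⟨f ∘ e.symm, fun x y hxy => f.lt_iff_lt.mpr ?_, fun x y => ?_⟩
    · simpa [he_pos] using hxy
    · simpa [he_val] using hf (e.symm x) (e.symm y)
  · rintro ⟨Z, hZ_pos, hZ_val⟩
    refine ⟨OrderEmbedding.ofStrictMono (Z ∘ e) fun x y hxy => hZ_pos ((he_pos x y).mp hxy),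
      fun x y => ?_⟩
    exact (he_val x y).trans (hZ_val (e x) (e y))

end IsBlockPattern

theorem val_apply_cast {p : Fin n → ℕ} (q : ∀ i, Perm' (p i)) {i k : Fin n} (h : i = k)
    (x : Fin (p i)) : (q k (Fin.cast (congrArg p h) x) : ℕ) = q i x := by
  subst h
  rfl

namespace IsInflation

variable {N : ℕ} {π : Perm' n} {τ : Perm' N} {p : Fin n → ℕ} {q : ∀ i, Perm' (p i)}
  {γ : Perm' g}

theorem exists_equiv_lt_iff (hinf : IsInflation π p q τ) :
    ∃ e : (Σ i, Fin (p i)) ≃ Fin N,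
      (∀ u v, e u < e v ↔ u.1 < v.1 ∨ u.1 = v.1 ∧ (u.2 : ℕ) < v.2) ∧
      ∀ u v, τ (e u) < τ (e v) ↔ π u.1 < π v.1 ∨ u.1 = v.1 ∧ (q u.1 u.2 : ℕ) < q v.1 v.2 := by
  obtain ⟨e, he_pos, he_val⟩ := hinf
  refine ⟨e, fun ⟨i, x⟩ ⟨j, y⟩ => ?_, fun ⟨i, x⟩ ⟨j, y⟩ => ?_⟩
  · rw [he_pos]
    rcases eq_or_ne i j with rfl | hij <;> simp [*]
  · rw [he_val]
    rcases eq_or_ne i j with rfl | hij <;> simp [*]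

theorem exists_patternEmbedding_of_isPattern (hinf : IsInflation π p q τ)
    (hγ : IsPattern γ τ) :
    ∃ α : PatternEmbedding γ π, ∀ (k : Fin n) (s : ℕ) (ρ : Perm' s),
      IsBlockPattern γ (α.c k.castSucc) (α.c k.succ) ρ → IsPattern ρ (q k) := by
  obtain ⟨e, he_pos, he_val⟩ := hinf.exists_equiv_lt_iff
  obtain ⟨f, hf⟩ := hγ
  set u : Fin g → Σ i, Fin (p i) := fun a => e.symm (f a)
  have hu_pos : ∀ a b, a < b ↔ (u a).1 < (u b).1 ∨ (u a).1 = (u b).1 ∧ ((u a).2 : ℕ) < (u b).2 :=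
    fun a b => by rw [← f.lt_iff_lt, ← he_pos]; simp [u]
  have hu_val : ∀ a b, γ a < γ b ↔
      π (u a).1 < π (u b).1 ∨ (u a).1 = (u b).1 ∧ (q (u a).1 (u a).2 : ℕ) < q (u b).1 (u b).2 :=
    fun a b => by rw [hf, ← he_val]; simp [u]
  have hmono : Monotone fun a => (u a).1 := fun a b hab => by
    rcases hab.lt_or_eq with hab | rfl
    · rcases (hu_pos a b).mp hab with h | h
      exacts [h.le, h.1.le]
    · rfl
  let α := PatternEmbedding.ofBlockMap _ hmono fun a b hab =>
    (hu_val a b).trans (or_iff_left fun h => hab h.1)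
  refine ⟨α, fun k s ρ hρ => hρ.isPattern_iff.mpr ?_⟩
  have hk : ∀ x : Block g (α.c k.castSucc) (α.c k.succ), (u x.1).1 = k :=
    fun x => (blockCuts_le_and_lt_blockCuts_iff hmono).mp x.2
  refine ⟨fun x => Fin.cast (congrArg p (hk x)) (u x.1).2, fun x y hxy => ?_, fun x y => ?_⟩
  · simpa [Fin.lt_def, hk] using (hu_pos x.1 y.1).mp hxy
  · simp [hu_val, hk, Fin.lt_def, val_apply_cast]

theorem isPattern_of_patternEmbedding (hinf : IsInflation π p q τ) (α : PatternEmbedding γ π)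
    (hblocks : ∀ k : Fin n, ∃ (s : ℕ) (ρ : Perm' s),
      IsBlockPattern γ (α.c k.castSucc) (α.c k.succ) ρ ∧ IsPattern ρ (q k)) :
    IsPattern γ τ := by
  obtain ⟨e, he_pos, he_val⟩ := hinf.exists_equiv_lt_iff
  have hZ : ∀ k : Fin n, ∃ Z : Block g (α.c k.castSucc) (α.c k.succ) → Fin (p k),
      StrictMono Z ∧ ∀ x y, γ x.1 < γ y.1 ↔ q k (Z x) < q k (Z y) := fun k => by
    obtain ⟨s, ρ, hρ, hpat⟩ := hblocks k
    exact hρ.isPattern_iff.mp hpat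
  choose Z hZ_pos hZ_val using hZ
  choose K hK using fun a : Fin g => exists_cut_le_lt_cut α.first (a.2.trans_eq α.last.symm)
  have hK_mono : Monotone K := fun a b hab => α.mono.le_of_cut_le_of_lt_cut (hK a).1 (hK b).2 hab
  set u : Fin g → Σ i, Fin (p i) := fun a => ⟨K a, Z (K a) ⟨a, hK a⟩⟩
  -- quantified over `k = k'`, as `K a = K b` holds only propositionally
  have same_block : ∀ {k k'} (h : k = k') (x : Block g (α.c k.castSucc) (α.c k.succ))
      (y : Block g (α.c k'.castSucc) (α.c k'.succ)),
      (x.1 < y.1 ↔ (Z k x : ℕ) < Z k' y) ∧ (γ x.1 < γ y.1 ↔ (q k (Z k x) : ℕ) < q k' (Z k' y)) := by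
    rintro k _ rfl x y
    exact ⟨(hZ_pos k).lt_iff_lt.symm, hZ_val k x y⟩
  refine ⟨OrderEmbedding.ofStrictMono (e ∘ u) fun a b hab => ?_, fun a b => ?_⟩
  · rcases (hK_mono hab.le).lt_or_eq with h | h
    · exact (he_pos _ _).mpr (Or.inl h)
    · exact (he_pos _ _).mpr (Or.inr ⟨h, (same_block h _ _).1.mp hab⟩)
  · change γ a < γ b ↔ τ (e (u a)) < τ (e (u b))
    rw [he_val]
    by_cases h : K a = K b
    · simp [u, h, ← (same_block h _ _).2]
    · simp [u, h, α.compat _ _ a b h (hK a).1 (hK a).2 (hK b).1 (hK b).2]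

end IsInflation

end

theorem inflSet_avoiding_eq_union_general {n g : ℕ} (π : Perm' n)
    (C : Fin n → Set PermS) (γ : Perm' g) (hC : ∀ i, ∀ x ∈ C i, 1 ≤ x.1) :
    {τ ∈ InflSet π C | ¬ PattLe ⟨g, γ⟩ τ} =
      ⋃ (κ : PatternEmbedding γ π → Fin n)
        (_ : ∀ α : PatternEmbedding γ π, 2 ≤ α.c (κ α).succ - α.c (κ α).castSucc),
        InflSet π (fun m =>
          {x ∈ C m | ∀ α : PatternEmbedding γ π, κ α = m →
            ∀ (s : ℕ) (ρ : Perm' s),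
              IsBlockPattern γ (α.c (κ α).castSucc) (α.c (κ α).succ) ρ →
                ¬ PattLe ⟨s, ρ⟩ x}) := by
  ext ⟨N, τ⟩
  simp only [Set.mem_iUnion, InflSet, PattLe, Set.mem_ofPred_eq]
  constructor
  · rintro ⟨⟨p, q, hq, hinf⟩, hτ⟩
    have hκ : ∀ α : PatternEmbedding γ π, ∃ k : Fin n, 2 ≤ α.c k.succ - α.c k.castSucc ∧
        ∀ (s : ℕ) (ρ : Perm' s), IsBlockPattern γ (α.c k.castSucc) (α.c k.succ) ρ →
          ¬ IsPattern ρ (q k) := by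
      intro α
      by_contra! h
      refine hτ (hinf.isPattern_of_patternEmbedding α fun k => ?_)
      obtain ⟨s, ρ, hρ⟩ := exists_isBlockPattern γ (α.c k.castSucc) (α.c k.succ)
      by_cases hk : 2 ≤ α.c k.succ - α.c k.castSucc
      · exact h k hk
      · have hs := hρ.size_le_one (by omega)
        exact ⟨s, ρ, hρ, .of_size_le_one ρ (q k) hs (hs.trans (hC k _ (hq k)))⟩
    choose κ hκ_size hκ_avoid using hκ
    exact ⟨κ, hκ_size, p, q, fun m => ⟨hq m, by rintro α rfl; exact hκ_avoid α⟩, hinf⟩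
  · rintro ⟨κ, -, p, q, hq, hinf⟩
    refine ⟨⟨p, q, fun i => (hq i).1, hinf⟩, fun hγ => ?_⟩
    obtain ⟨α, hα⟩ := hinf.exists_patternEmbedding_of_isPattern hγ
    obtain ⟨s, ρ, hρ⟩ := exists_isBlockPattern γ (α.c (κ α).castSucc) (α.c (κ α).succ)
    exact (hq (κ α)).2 α rfl s ρ hρ (hα _ s ρ hρ)

/-- Propagation of an avoidance constraint: for a simple root `π`, the permutations of
`π[C₁,…,Cₙ]` avoiding `γ` are the union, over all choices `κ` selecting for each
embedding `α` of `γ` in `π` a coordinate whose block `γ_{α(κ α)}` has size at least 2, of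
the sets `π[C₁⟨E₁⟩,…,Cₙ⟨Eₙ⟩]` where `Eₘ = {γ_{α(κ α)} : κ α = m}`. -/
theorem inflSet_avoiding_eq_union {n g : ℕ} (π : Perm' n) (hπ : IsSimple π)
    (C : Fin n → Set PermS) (γ : Perm' g) (hC : ∀ i, ∀ x ∈ C i, 1 ≤ x.1) :
    {τ ∈ InflSet π C | ¬ PattLe ⟨g, γ⟩ τ} =
      ⋃ (κ : PatternEmbedding γ π → Fin n)
        (_ : ∀ α : PatternEmbedding γ π, 2 ≤ α.c (κ α).succ - α.c (κ α).castSucc),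
        InflSet π (fun m =>
          {x ∈ C m | ∀ α : PatternEmbedding γ π, κ α = m →
            ∀ (s : ℕ) (ρ : Perm' s),
              IsBlockPattern γ (α.c (κ α).castSucc) (α.c (κ α).succ) ρ →
                ¬ PattLe ⟨s, ρ⟩ x}) :=
  inflSet_avoiding_eq_union_general π C γ hC
end
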